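/- arXiv:1911.12857 — 2 statements merged into one kernel-verified Lean document; each statement's English description precedes it below -/
import Mathlib

section
/- In the free group F on a set S, if w is an element whose reduced word has length n and the reduced word of w·w has length 2n (no cancellation occurs), then for every m ≥ 1 the reduced word of w^m has length m·n. -/
private lemma fgwb_chain_of_reduce {α : Type*} [DecidableEq α] :
    ∀ (L : List (α × Bool)), FreeGroup.reduce L = L →
      List.Chain' (fun a b : α × Bool => ¬(a.1 = b.1 ∧ a.2 = !b.2)) L := by
  intro L
  induction L with
  | nil => intro _; simp [List.Chain']
  | cons x L ih =>
    intro h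
    rw [FreeGroup.reduce.cons] at h
    rcases hL : FreeGroup.reduce L with - | ⟨hd, tl⟩
    · rw [hL] at h
      dsimp only at h
      simp only [List.cons.injEq, true_and] at h
      subst h
      simp [List.Chain']
    · rw [hL] at h
      dsimp only at h
      by_cases hc : x.1 = hd.1 ∧ x.2 = !hd.2
      · rw [if_pos hc] at h
        have hlen : tl.length ≤ L.length := by
          have := (FreeGroup.reduce.red (L := L)).length_le
          rw [hL] at this
          simp at this
          omega
        have : (x :: L).length = tl.length := by rw [h]
        simp at this
        omega
      · rw [if_neg hc] at h
        have hL' : L = hd :: tl := by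
          injection h with _ h2
          exact h2.symm
        have hred : FreeGroup.reduce L = L := by rw [hL, hL']
        have hchain := ih hred
        rw [hL']
        exact List.IsChain.cons_cons hc (hL' ▸ hchain)

private lemma fgwb_reduce_of_chain {α : Type*} [DecidableEq α] :
    ∀ (L : List (α × Bool)),
      List.Chain' (fun a b : α × Bool => ¬(a.1 = b.1 ∧ a.2 = !b.2)) L →
      FreeGroup.reduce L = L := by
  intro L
  induction L with
  | nil => intro _; rfl
  | cons x L ih =>
    intro h
    rw [FreeGroup.reduce.cons]
    rcases L with - | ⟨hd, tl⟩
    · rfl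
    · have hred := ih h.tail
      rw [hred]
      dsimp only
      rw [if_neg (List.isChain_cons_cons.mp h).1]

private lemma fgwb_chain_flatten {α : Type*} [DecidableEq α] (u : List (α × Bool))
    (h : List.Chain' (fun a b : α × Bool => ¬(a.1 = b.1 ∧ a.2 = !b.2)) (u ++ u)) :
    ∀ m : ℕ, List.Chain' (fun a b : α × Bool => ¬(a.1 = b.1 ∧ a.2 = !b.2))
      (List.flatten (List.replicate m u)) := by
  rcases eq_or_ne u [] with rfl | hu
  · intro m; simp [List.Chain']
  · have h' := List.isChain_append.mp h
    intro m
    induction m with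
    | zero => simp [List.Chain']
    | succ m ih =>
      rw [List.replicate_succ, List.flatten_cons]
      rw [List.Chain', List.isChain_append]
      refine ⟨h'.1, ih, ?_⟩
      intro x hx y hy
      cases m with
      | zero => simp at hy
      | succ m =>
        rw [List.replicate_succ, List.flatten_cons, List.head?_append] at hy
        rcases List.exists_cons_of_ne_nil hu with ⟨a, l, rfl⟩
        simp at hy
        apply h'.2.2 x hx
        simp [hy]

theorem free_group_well_behaved_power_length {S : Type*} [DecidableEq S]
    (w : FreeGroup S) (hw : (w * w).toWord.length = 2 * w.toWord.length) :
    ∀ m : ℕ, 1 ≤ m → (w ^ m).toWord.length = m * w.toWord.length := by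
  set u := w.toWord with hu
  have hmk : FreeGroup.mk u = w := FreeGroup.mk_toWord
  have hmul : (w * w).toWord = FreeGroup.reduce (u ++ u) := by
    rw [← hmk, FreeGroup.mul_mk, FreeGroup.toWord_mk]
  have hred2 : FreeGroup.reduce (u ++ u) = u ++ u := by
    have hsub : List.Sublist (FreeGroup.reduce (u ++ u)) (u ++ u) :=
      (FreeGroup.reduce.red (L := u ++ u)).sublist
    apply hsub.eq_of_length
    rw [← hmul, hw]
    simp [two_mul]
  have hchain2 := fgwb_chain_of_reduce _ hred2
  intro m _
  have hpow : (w ^ m).toWord = List.flatten (List.replicate m u) := by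
    rw [← hmk, FreeGroup.pow_mk, FreeGroup.toWord_mk,
      fgwb_reduce_of_chain _ (fgwb_chain_flatten u hchain2 m)]
  rw [hpow]
  simp [List.length_flatten, mul_comm]
end

section
/- Let G and H be groups with G a subgroup of H of finite index l, and let C be a finite set of right coset representatives with 1 ∈ C. For u ∈ H and c, d ∈ C, the set {z ∈ ℕ | c·u^z·d⁻¹ ∈ G} is eventually periodic with period at most l and threshold at most l: there exist k with 1 ≤ k ≤ l such that for all z ≥ l, c·u^z·d⁻¹ ∈ G iff c·u^{z+k}·d⁻¹ ∈ G. -/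
/-!
Since `c * u ^ z * d⁻¹ ∈ G` says that `u⁻¹` moves the coset of `c⁻¹` in `H ⧸ G` to that of `d⁻¹`
in `z` steps, the question is about one orbit of the self-map `u⁻¹ • ·` of a set with `l`
elements. By pigeonhole the first `l + 1` points of that orbit contain a repetition, after which
the orbit is periodic with period at most `l`.
-/

namespace Function

variable {α : Type*} [Finite α]

theorem exists_lt_le_card_iterate_eq (f : α → α) (x : α) :
    ∃ i j, i < j ∧ j ≤ Nat.card α ∧ f^[i] x = f^[j] x := by
  have hnot : ¬ Injective fun i : Fin (Nat.card α + 1) ↦ f^[i] x := fun hinj ↦ by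
    simpa using Nat.card_le_card_of_injective _ hinj
  obtain ⟨i, j, heq, hne⟩ := not_injective_iff.mp hnot
  rcases lt_or_gt_of_ne (Fin.val_ne_of_ne hne) with hij | hji
  · exact ⟨i, j, hij, Fin.is_le j, heq⟩
  · exact ⟨j, i, hji, Fin.is_le i, heq.symm⟩

theorem exists_pos_le_card_iterate_add_eq (f : α → α) (x : α) :
    ∃ p, 0 < p ∧ p ≤ Nat.card α ∧ ∀ n, Nat.card α ≤ n → f^[n + p] x = f^[n] x := by
  obtain ⟨i, j, hij, hj, heq⟩ := exists_lt_le_card_iterate_eq f x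
  have hper : IsPeriodicPt f (j - i) (f^[i] x) := by
    rw [IsPeriodicPt, IsFixedPt, ← iterate_add_apply, Nat.sub_add_cancel hij.le, heq]
  refine ⟨j - i, Nat.sub_pos_of_lt hij, by omega, fun n hn ↦ ?_⟩
  calc f^[n + (j - i)] x = f^[n - i] (f^[j - i] (f^[i] x)) := by
        rw [← iterate_add_apply, ← iterate_add_apply]; congr 1; omega
    _ = f^[n - i] (f^[i] x) := by rw [hper.eq]
    _ = f^[n] x := by rw [← iterate_add_apply, Nat.sub_add_cancel (by omega)]

end Function

theorem QuotientGroup.mul_mul_inv_mem_iff_smul_eq {H : Type*} [Group H] (G : Subgroup H)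
    (a g b : H) : a * g * b⁻¹ ∈ G ↔ g⁻¹ • ((a⁻¹ : H) : H ⧸ G) = ((b⁻¹ : H) : H ⧸ G) := by
  rw [MulAction.Quotient.smul_mk, QuotientGroup.eq, smul_eq_mul, mul_inv_rev, inv_inv, inv_inv]

theorem coset_membership_eventually_periodic_general {H : Type*} [Group H] (G : Subgroup H)
    (l : ℕ) (hl : G.index = l) (hl0 : 0 < l)
    (u : H) (c d : H) :
    ∃ k : ℕ, 1 ≤ k ∧ k ≤ l ∧
      ∀ z : ℕ, l ≤ z → (c * u ^ z * d⁻¹ ∈ G ↔ c * u ^ (z + k) * d⁻¹ ∈ G) := by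
  have : G.FiniteIndex := ⟨hl ▸ hl0.ne'⟩
  have hcard : Nat.card (H ⧸ G) = l := G.index_eq_card ▸ hl
  obtain ⟨k, hk, hkl, hper⟩ :=
    Function.exists_pos_le_card_iterate_add_eq (u⁻¹ • · : H ⧸ G → H ⧸ G) (c⁻¹ : H)
  rw [hcard] at hkl hper
  refine ⟨k, hk, hkl, fun z hz ↦ ?_⟩
  simp only [QuotientGroup.mul_mul_inv_mem_iff_smul_eq, ← inv_pow, ← smul_iterate_apply,
    hper z hz]

theorem coset_membership_eventually_periodic {H : Type*} [Group H] (G : Subgroup H)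
    (l : ℕ) (hl : G.index = l) (hl0 : 0 < l)
    (C : Finset H) (h1 : (1 : H) ∈ C) (hcard : C.card = l)
    (hrep : ∀ h : H, ∃! c : H, c ∈ C ∧ h * c⁻¹ ∈ G)
    (u : H) (c d : H) (hc : c ∈ C) (hd : d ∈ C) :
    ∃ k : ℕ, 1 ≤ k ∧ k ≤ l ∧
      ∀ z : ℕ, l ≤ z → (c * u ^ z * d⁻¹ ∈ G ↔ c * u ^ (z + k) * d⁻¹ ∈ G) :=
  coset_membership_eventually_periodic_general G l hl hl0 u c d
end
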